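/- arXiv:1703.06798 — 2 statements merged into one kernel-verified Lean document; each statement's English description precedes it below -/
import Mathlib

section
/- For every w ∈ S_n there exists a largest projection p ∈ D_n satisfying pw = p; that is, there is a projection p ∈ D_n with pw = p such that every projection p' ∈ D_n with p'w = p' satisfies p' ≤ p. -/
/-!
Write `w = ∑_{(α,β) ∈ J} S_α S_β*` and let `N` bound the lengths of the `β`. For `|ν| ≥ N`,
`w S_ν` lies in the span of the words `S_μ`, on which right multiplication by any `S_γ` is
injective (with two letters one builds aperiodic words that separate the coefficients); so
`w S_(νγ) = S_(νγ)` forces `w S_ν = S_ν`. The candidate is `p = ∑ P_ν` over the `ν` of length `N`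
with `w S_ν = S_ν`. A projection `q` of the diagonal is, on every cylinder `P_σ` of a large enough
level, either `0` or `P_σ`; if `q w = q`, each cylinder under `q` is fixed by `w`, hence lies under
a fixed cylinder of level `N`, and so `q ≤ p`.
-/

open scoped BigOperators

variable {A : Type*} [CStarAlgebra A] [PartialOrder A] [StarOrderedRing A]

/-- `Sw S μ = S_{μ_1} ⋯ S_{μ_k}`. -/
def Sw {n : ℕ} (S : Fin n → A) (μ : List (Fin n)) : A := (μ.map S).prod

/-- `Pw S μ = S_μ S_μ*`. -/
def Pw {n : ℕ} (S : Fin n → A) (μ : List (Fin n)) : A := Sw S μ * star (Sw S μ)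

/-- The set 𝒱_n of finite sums ∑ S_α S_β*. -/
def Vset {n : ℕ} (S : Fin n → A) : Set A :=
  {x | ∃ J : Finset (List (Fin n) × List (Fin n)),
      x = ∑ p ∈ J, Sw S p.1 * star (Sw S p.2)}

/-- The Thompson-like group `S_n = 𝒱_n ∩ U(O_n)`; for n = 2 this is Thompson's group V. -/
def Vgrp {n : ℕ} (S : Fin n → A) : Set A := Vset S ∩ (unitary A : Set A)

/-- The diagonal D_n: closed linear span of the projections P_μ. -/
def Ddiag {n : ℕ} (S : Fin n → A) : Set A :=
  ((Submodule.span ℂ (Set.range (Pw S))).topologicalClosure : Submodule ℂ A)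

/-- Projection: self-adjoint idempotent. -/
def IsProjection (p : A) : Prop := IsSelfAdjoint p ∧ p * p = p

/-- Concatenation ν_1 ν_2 ⋯ ν_k. -/
def wcat {n : ℕ} (ν : ℕ → List (Fin n)) (k : ℕ) : List (Fin n) :=
  ((List.range k).map ν).flatten

/-- Modestly scaling endomorphism. -/
def ModestlyScaling {n : ℕ} (S : Fin n → A) (α : A →⋆ₐ[ℂ] A) : Prop :=
  ∀ ν : ℕ → List (Fin n), (∀ k, ν k ≠ []) →
    ∀ p : A, IsProjection p → (∀ k : ℕ, p ≤ α (Pw S (wcat ν (k + 1)))) → p = 0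

/-- Generator x_0 of Thompson's group F inside U(O_2). -/
def x0 (S : Fin 2 → A) : A :=
  S 0 * S 0 * star (S 0) + S 0 * S 1 * star (S 0) * star (S 1) + S 1 * star (S 1) * star (S 1)

/-- Generators x_k of Thompson's group F inside U(O_2). -/
def xgen (S : Fin 2 → A) : ℕ → A
  | 0 => x0 S
  | k + 1 => 1 - S 1 ^ (k + 1) * star (S 1 ^ (k + 1)) + S 1 ^ (k + 1) * x0 S * star (S 1 ^ (k + 1))

/-- Thompson's group F inside U(O_2): the subgroup generated by the x_k
(as a set: the submonoid generated by the x_k and their adjoints = inverses). -/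
def Fgrp (S : Fin 2 → A) : Set A :=
  (Submonoid.closure (Set.range (xgen S) ∪ star '' Set.range (xgen S)) : Set A)

/-- The extra generator for Thompson's group T. -/
def tgen (S : Fin 2 → A) : A :=
  S 1 * S 1 * star (S 0) + S 0 * star (S 0) * star (S 1) + S 1 * S 0 * star (S 1) * star (S 1)

/-- Thompson's group T inside U(O_2). -/
def Tgrp (S : Fin 2 → A) : Set A :=
  (Submonoid.closure ((Set.range (xgen S) ∪ {tgen S}) ∪
      star '' (Set.range (xgen S) ∪ {tgen S})) : Set A)

/-- `IsOneW S w p`: p is the largest projection in D_n with p w = p, i.e. p = 𝟙_w. -/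
def IsOneW {n : ℕ} (S : Fin n → A) (w p : A) : Prop :=
  p ∈ Ddiag S ∧ IsProjection p ∧ p * w = p ∧
    ∀ p' : A, p' ∈ Ddiag S → IsProjection p' → p' * w = p' → p' ≤ p

/-- min(q) = inf { |μ| : P_μ ≤ q } ∈ ℕ ∪ {∞}. -/
noncomputable def minProj {n : ℕ} (S : Fin n → A) (q : A) : ℕ∞ :=
  ⨅ μ ∈ {μ : List (Fin n) | Pw S μ ≤ q}, (μ.length : ℕ∞)

/-- The core UHF subalgebra F_n: closed linear span of {S_μ S_ν* : |μ| = |ν|}. -/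
def UHF {n : ℕ} (S : Fin n → A) : Set A :=
  ((Submodule.span ℂ {x : A | ∃ μ ν : List (Fin n), μ.length = ν.length ∧
      x = Sw S μ * star (Sw S ν)}).topologicalClosure : Submodule ℂ A)

/-- μ ≺ ν : at the first index where μ and ν differ, the letter of μ is smaller. -/
def WordLt {n : ℕ} (μ ν : List (Fin n)) : Prop :=
  ∃ σ : List (Fin n), ∃ a b : Fin n, a < b ∧ (σ ++ [a]) <+: μ ∧ (σ ++ [b]) <+: ν


theorem List.eq_nil_of_prefix_append_self {α : Type*} {a b : α} (hab : a ≠ b)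
    {σ m : List α} {K : ℕ} (hm : m.length ≤ K)
    (h : σ ++ a :: replicate K b <+: m ++ (σ ++ a :: replicate K b)) : m = [] := by
  by_contra hne
  have hi : σ.length + m.length < (σ ++ a :: replicate K b).length := by
    have := length_pos_iff.mpr hne
    simp only [length_append, length_cons, length_replicate]
    omega
  exact hab (by simpa [getElem_append_right, getElem_cons, hne] using (h.getElem hi).symm)

theorem List.eq_of_append_prefix_append {α : Type*} {a b : α} (hab : a ≠ b)
    {σ δ μ : List α} {K : ℕ} (hμ : μ.length ≤ K)
    (h : δ ++ (σ ++ a :: replicate K b) <+: μ ++ (σ ++ a :: replicate K b)) : δ = μ := by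
  obtain ⟨m, rfl⟩ : δ <+: μ := prefix_of_prefix_length_le ((prefix_append _ _).trans h)
    (prefix_append _ _) (by simpa using h.length_le)
  rw [append_assoc, prefix_append_right_inj] at h
  rw [eq_nil_of_prefix_append_self hab (le_trans (by simp) hμ) h, append_nil]

theorem mul_star_mul_eq_self_iff {R : Type*} [Monoid R] [StarMul R] {v w : R}
    (hv : star v * v = 1) (hw : w ∈ unitary R) : v * star v * w = v * star v ↔ w * v = v := by
  constructor
  · intro h
    have h1 : star v * w = star v := by simpa [← mul_assoc, hv] using congr(star v * $h)
    have h2 : star w * v = v := by simpa [star_mul] using congr(star $h1)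
    calc w * v = w * (star w * v) := by rw [h2]
      _ = v := by rw [← mul_assoc, Unitary.mul_star_self_of_mem hw, one_mul]
  · intro h
    have h1 : star w * v = v := by
      calc star w * v = star w * (w * v) := by rw [h]
        _ = v := by rw [← mul_assoc, Unitary.star_mul_self_of_mem hw, one_mul]
    have h2 : star v * w = star v := by simpa [star_mul] using congr(star $h1)
    rw [mul_assoc, h2]

section CStarAlgebra

variable {A : Type*} [CStarAlgebra A]

theorem isProjection_iff_isStarProjection {p : A} : IsProjection p ↔ IsStarProjection p := by
  rw [isStarProjection_iff, IsProjection, and_comm]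
  rfl

theorem isStarProjection_mul_star_of_star_mul_self {v : A} (hv : star v * v = 1) :
    IsStarProjection (v * star v) where
  isIdempotentElem := by
    rw [IsIdempotentElem, mul_assoc, ← mul_assoc (star v), hv, one_mul]
  isSelfAdjoint := .mul_star_self v

theorem norm_le_one_of_star_mul_self {v : A} (hv : star v * v = 1) : ‖v‖ ≤ 1 := by
  have h : ‖v‖ * ‖v‖ ≤ 1 := by
    rw [← CStarRing.norm_star_mul_self, hv]
    exact IsStarProjection.norm_le 1 (.one A)
  nlinarith [norm_nonneg v]

theorem norm_star_mul_mul_le_of_star_mul_self {v : A} (hv : star v * v = 1) (x : A) :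
    ‖star v * x * v‖ ≤ ‖x‖ := by
  have hv1 := norm_le_one_of_star_mul_self hv
  calc ‖star v * x * v‖ ≤ ‖v‖ * ‖x‖ * ‖v‖ := by
        simpa using norm_mul₃_le (a := star v) (b := x) (c := v)
    _ ≤ 1 * ‖x‖ * 1 := by gcongr
    _ = ‖x‖ := by ring

theorem IsStarProjection.norm_eq_one {p : A} (hp : IsStarProjection p) (h0 : p ≠ 0) :
    ‖p‖ = 1 := by
  have h : ‖p‖ * ‖p‖ = ‖p‖ := by
    rw [← CStarRing.norm_star_mul_self, hp.isSelfAdjoint.star_eq, hp.isIdempotentElem.eq]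
  have := norm_pos_iff.mpr h0
  nlinarith

theorem IsStarProjection.eq_zero_or_eq_one_of_norm_sub_lt {r : A} (hr : IsStarProjection r)
    {c : ℂ} (h : ‖r - c • 1‖ < 1 / 2) : r = 0 ∨ r = 1 := by
  by_contra! hne
  have hr1 : ‖r‖ = 1 := hr.norm_eq_one hne.1
  have hr1' : ‖1 - r‖ = 1 := hr.one_sub.norm_eq_one (sub_ne_zero.mpr hne.2.symm)
  have h1 : ‖(1 - c) • r‖ < 1 / 2 := by
    have : (1 - c) • r = (r - c • 1) * r := by
      rw [sub_mul, hr.isIdempotentElem.eq, smul_mul_assoc, one_mul, sub_smul, one_smul]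
    rw [this]
    exact (norm_mul_le _ _).trans_lt (by rwa [hr1, mul_one])
  have h2 : ‖c • (1 - r)‖ < 1 / 2 := by
    have : c • (1 - r) = -((r - c • 1) * (1 - r)) := by
      rw [sub_mul, hr.mul_one_sub_self, smul_mul_assoc, one_mul]
      simp
    rw [this, norm_neg]
    exact (norm_mul_le _ _).trans_lt (by rwa [hr1', mul_one])
  rw [norm_smul, hr1, mul_one] at h1
  rw [norm_smul, hr1', mul_one] at h2
  have := norm_add_le (1 - c) c
  rw [sub_add_cancel, norm_one] at this
  linarith

theorem star_mul_eq_zero_of_sum_mul_star_eq_one [PartialOrder A] [StarOrderedRing A]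
    {ι : Type*} [Fintype ι] {v : ι → A} (hv : ∀ i, star (v i) * v i = 1)
    (hsum : ∑ i, v i * star (v i) = 1) {i j : ι} (hij : i ≠ j) : star (v i) * v j = 0 := by
  classical
  have hP k : IsStarProjection (v k * star (v k)) :=
    isStarProjection_mul_star_of_star_mul_self (hv k)
  have hle : v j * star (v j) ≤ 1 - v i * star (v i) := by
    have hrest : 1 - v i * star (v i) - v j * star (v j)
        = ∑ k ∈ (Finset.univ.erase i).erase j, v k * star (v k) := by
      rw [← hsum, ← Finset.add_sum_erase _ _ (Finset.mem_univ i),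
        ← Finset.add_sum_erase _ _ (Finset.mem_erase.mpr ⟨hij.symm, Finset.mem_univ j⟩)]
      abel
    exact sub_nonneg.mp (hrest ▸ Finset.sum_nonneg fun k _ => (hP k).nonneg)
  have hji : v j * star (v j) * (v i * star (v i)) = 0 := by
    have := ((hP j).le_iff_mul_eq_left (hP i).one_sub).mp hle
    rwa [mul_sub, mul_one, sub_eq_self] at this
  have hij' : v i * star (v i) * (v j * star (v j)) = 0 := by
    simpa [star_mul, mul_assoc] using congr(star $hji)
  calc star (v i) * v j = star (v i) * v i * star (v i) * v j * (star (v j) * v j) := by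
        rw [hv, hv, one_mul, mul_one]
    _ = star (v i) * (v i * star (v i) * (v j * star (v j))) * v j := by noncomm_ring
    _ = 0 := by rw [hij', mul_zero, zero_mul]

end CStarAlgebra

section Words

variable {A : Type*} [CStarAlgebra A] {n : ℕ} (S : Fin n → A)

@[simp] theorem Sw_nil : Sw S [] = 1 := rfl

@[simp] theorem Sw_cons (a : Fin n) (μ : List (Fin n)) : Sw S (a :: μ) = S a * Sw S μ := by
  simp [Sw]

theorem Sw_append (μ ν : List (Fin n)) : Sw S (μ ++ ν) = Sw S μ * Sw S ν := by
  simp [Sw]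

@[simp] theorem star_Pw (μ : List (Fin n)) : star (Pw S μ) = Pw S μ :=
  (IsSelfAdjoint.mul_star_self _).star_eq

theorem Pw_cons (a : Fin n) (μ : List (Fin n)) : Pw S (a :: μ) = S a * Pw S μ * star (S a) := by
  simp [Pw, star_mul, mul_assoc]

structure IsCuntzFamily : Prop where
  star_mul_self : ∀ i, star (S i) * S i = 1
  sum_mul_star : ∑ i, S i * star (S i) = 1

variable {S} (hS : IsCuntzFamily S)
include hS

theorem IsCuntzFamily.star_Sw_mul_Sw_self (μ : List (Fin n)) : star (Sw S μ) * Sw S μ = 1 := by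
  induction μ with
  | nil => simp
  | cons a μ ih =>
    rw [Sw_cons, star_mul, mul_assoc, ← mul_assoc (star (S a)), hS.star_mul_self, one_mul, ih]

theorem IsCuntzFamily.isStarProjection_Pw (μ : List (Fin n)) : IsStarProjection (Pw S μ) :=
  isStarProjection_mul_star_of_star_mul_self (hS.star_Sw_mul_Sw_self μ)

theorem IsCuntzFamily.sum_Pw_ofFn (k : ℕ) : ∑ f : Fin k → Fin n, Pw S (List.ofFn f) = 1 := by
  induction k with
  | zero => simp [Pw]
  | succ k ih =>
    rw [← (Fin.consEquiv fun _ => Fin n).sum_comp, Fintype.sum_prod_type]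
    simp only [Fin.consEquiv, Equiv.coe_fn_mk, List.ofFn_succ, Fin.cons_zero, Fin.cons_succ]
    simp only [Pw_cons, ← Finset.sum_mul, ← Finset.mul_sum, ih, mul_one, hS.sum_mul_star]

end Words

section Orthogonality

variable {A : Type*} [CStarAlgebra A] [PartialOrder A] [StarOrderedRing A] {n : ℕ}
  {S : Fin n → A} (hS : IsCuntzFamily S)
include hS

theorem IsCuntzFamily.star_mul_eq_zero {i j : Fin n} (hij : i ≠ j) : star (S i) * S j = 0 :=
  star_mul_eq_zero_of_sum_mul_star_eq_one hS.star_mul_self hS.sum_mul_star hij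

theorem IsCuntzFamily.star_Sw_mul_Sw {μ ν : List (Fin n)} (h : μ.length ≤ ν.length) :
    star (Sw S μ) * Sw S ν = if μ <+: ν then Sw S (ν.drop μ.length) else 0 := by
  induction μ generalizing ν with
  | nil => simp
  | cons a μ ih =>
    obtain _ | ⟨b, ν⟩ := ν
    · simp at h
    rw [Sw_cons, Sw_cons, star_mul, mul_assoc, ← mul_assoc (star (S a))]
    by_cases hab : a = b
    · subst hab
      rw [hS.star_mul_self, one_mul, ih (by simpa using h)]
      simp [List.cons_prefix_cons]
    · simp [hS.star_mul_eq_zero hab, List.cons_prefix_cons, hab]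

theorem IsCuntzFamily.Pw_mul_Pw {μ ν : List (Fin n)} (h : μ.length ≤ ν.length) :
    Pw S μ * Pw S ν = if μ <+: ν then Pw S ν else 0 := by
  rw [Pw, Pw, mul_assoc, ← mul_assoc (star (Sw S μ)), hS.star_Sw_mul_Sw h]
  split_ifs with hμν
  · obtain ⟨t, rfl⟩ := hμν
    simp [Sw_append, mul_assoc]
  · simp

theorem IsCuntzFamily.commute_Pw (μ ν : List (Fin n)) : Commute (Pw S μ) (Pw S ν) := by
  wlog h : μ.length ≤ ν.length generalizing μ ν
  · exact (this ν μ (by omega)).symm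
  have hμν := hS.Pw_mul_Pw h
  have hνμ : Pw S ν * Pw S μ = if μ <+: ν then Pw S ν else 0 := by
    simpa [star_mul, apply_ite star] using congr(star $hμν)
  exact hμν.trans hνμ.symm

theorem IsCuntzFamily.star_Sw_mul_Pw_mul_Sw {μ σ : List (Fin n)} (h : μ.length ≤ σ.length) :
    star (Sw S σ) * Pw S μ * Sw S σ = if μ <+: σ then 1 else 0 := by
  have hμσ := hS.star_Sw_mul_Sw h
  rw [Pw, ← mul_assoc, mul_assoc _ _ (Sw S σ), hμσ, ← star_star (Sw S μ), ← star_mul, hμσ]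
  split_ifs
  · simp [hS.star_Sw_mul_Sw_self]
  · simp

theorem IsCuntzFamily.star_Sw_append_mul_Sw_append {a b : Fin n} (hab : a ≠ b)
    {σ δ μ : List (Fin n)} {K : ℕ} (hδ : δ.length ≤ K) (hμ : μ.length ≤ K) (hne : δ ≠ μ) :
    star (Sw S (δ ++ (σ ++ a :: .replicate K b))) * Sw S (μ ++ (σ ++ a :: .replicate K b)) = 0 := by
  wlog h : δ.length ≤ μ.length generalizing δ μ
  · simpa [star_mul] using congr(star $(this hμ hδ hne.symm (by omega)))
  rw [hS.star_Sw_mul_Sw (by simpa using h), if_neg]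
  exact fun hpre => hne (List.eq_of_append_prefix_append hab hμ hpre)

end Orthogonality

section Independence

variable {A : Type*} [CStarAlgebra A] [PartialOrder A] [StarOrderedRing A] {n : ℕ}
  {S : Fin n → A} (hS : IsCuntzFamily S)
include hS

/-- Compressing by `S_(δ ++ ρ)` with an aperiodic tail `ρ` isolates the coefficient of `S_δ`. -/
theorem IsCuntzFamily.eq_zero_of_mul_Sw_eq_zero (hn : 2 ≤ n) {x : A}
    (hx : x ∈ Submodule.span ℂ (Set.range (Sw S))) {γ : List (Fin n)} (h : x * Sw S γ = 0) :
    x = 0 := by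
  obtain ⟨c, rfl⟩ := Finsupp.mem_span_range_iff_exists_finsupp.mp hx
  refine Finset.sum_eq_zero fun δ hδ => ?_
  show c δ • Sw S δ = 0
  let a : Fin n := ⟨0, by omega⟩
  let b : Fin n := ⟨1, by omega⟩
  let K := c.support.sup List.length
  have hρ : (c.sum fun μ r => r • Sw S μ) * Sw S (γ ++ a :: .replicate K b) = 0 := by
    rw [Sw_append, ← mul_assoc, h, zero_mul]
  have hcoeff : c δ • (1 : A) = 0 := by
    rw [← mul_zero (star (Sw S (δ ++ (γ ++ a :: .replicate K b)))), ← hρ, Finsupp.sum,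
      Finset.sum_mul, Finset.mul_sum, Finset.sum_eq_single δ]
    · rw [smul_mul_assoc, mul_smul_comm, ← Sw_append, hS.star_Sw_mul_Sw_self]
    · intro μ hμ hμδ
      rw [smul_mul_assoc, mul_smul_comm, ← Sw_append,
        hS.star_Sw_append_mul_Sw_append (by simp [a, b]) (Finset.le_sup hδ) (Finset.le_sup hμ)
          hμδ.symm, smul_zero]
    · exact fun h => absurd hδ h
  rw [← one_mul (Sw S δ), ← smul_mul_assoc, hcoeff, zero_mul]

end Independence

section FixedWords

variable {A : Type*} [CStarAlgebra A] [PartialOrder A] [StarOrderedRing A] {n : ℕ}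
  {S : Fin n → A} (hS : IsCuntzFamily S)
include hS

theorem IsCuntzFamily.mul_Sw_mem_span {w : A} {J : Finset (List (Fin n) × List (Fin n))}
    (hJ : w = ∑ p ∈ J, Sw S p.1 * star (Sw S p.2)) {ν : List (Fin n)}
    (hν : ∀ p ∈ J, p.2.length ≤ ν.length) :
    w * Sw S ν ∈ Submodule.span ℂ (Set.range (Sw S)) := by
  rw [hJ, Finset.sum_mul]
  refine Submodule.sum_mem _ fun p hp => ?_
  rw [mul_assoc, hS.star_Sw_mul_Sw (hν p hp)]
  split_ifs
  · rw [← Sw_append]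
    exact Submodule.subset_span ⟨_, rfl⟩
  · rw [mul_zero]
    exact Submodule.zero_mem _

theorem IsCuntzFamily.mul_Sw_eq_of_mul_Sw_append_eq (hn : 2 ≤ n) {w : A}
    {J : Finset (List (Fin n) × List (Fin n))} (hJ : w = ∑ p ∈ J, Sw S p.1 * star (Sw S p.2))
    {ν γ : List (Fin n)} (hν : ∀ p ∈ J, p.2.length ≤ ν.length)
    (h : w * Sw S (ν ++ γ) = Sw S (ν ++ γ)) : w * Sw S ν = Sw S ν := by
  refine sub_eq_zero.mp (hS.eq_zero_of_mul_Sw_eq_zero hn (γ := γ)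
    (Submodule.sub_mem _ (hS.mul_Sw_mem_span hJ hν) (Submodule.subset_span ⟨ν, rfl⟩)) ?_)
  rw [sub_mul, mul_assoc, ← Sw_append, h, Sw_append, sub_self]

end FixedWords

section Diagonal

variable {A : Type*} [CStarAlgebra A] [PartialOrder A] [StarOrderedRing A] {n : ℕ}
  {S : Fin n → A} (hS : IsCuntzFamily S)
include hS

theorem IsCuntzFamily.commute_Pw_of_mem_Ddiag {x : A} (hx : x ∈ Ddiag S) (σ : List (Fin n)) :
    Commute x (Pw S σ) := by
  have hspan : Submodule.span ℂ (Set.range (Pw S))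
      ≤ Subalgebra.toSubmodule (Subalgebra.centralizer ℂ {Pw S σ}) := by
    rw [Submodule.span_le]
    rintro _ ⟨μ, rfl⟩
    simpa [Set.mem_centralizer_iff] using (hS.commute_Pw σ μ).eq
  have hclosed : IsClosed (Subalgebra.toSubmodule (Subalgebra.centralizer ℂ {Pw S σ}) : Set A) :=
    Set.isClosed_centralizer _
  have hxc : Pw S σ * x = x * Pw S σ := by
    simpa [Subalgebra.mem_centralizer_iff] using
      Submodule.topologicalClosure_minimal _ hspan hclosed hx
  exact hxc.symm

theorem IsCuntzFamily.exists_forall_star_Sw_mul_mul_Sw_eq_smul_one {x : A}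
    (hx : x ∈ Submodule.span ℂ (Set.range (Pw S))) :
    ∃ L, ∀ σ : List (Fin n), L ≤ σ.length → ∃ c : ℂ, star (Sw S σ) * x * Sw S σ = c • 1 := by
  induction hx using Submodule.span_induction with
  | mem y hy =>
    obtain ⟨μ, rfl⟩ := hy
    refine ⟨μ.length, fun σ hσ => ⟨if μ <+: σ then 1 else 0, ?_⟩⟩
    rw [hS.star_Sw_mul_Pw_mul_Sw hσ]
    split_ifs <;> simp
  | zero => exact ⟨0, fun σ _ => ⟨0, by simp⟩⟩
  | add y z _ _ hy hz =>
    obtain ⟨L₁, h₁⟩ := hy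
    obtain ⟨L₂, h₂⟩ := hz
    refine ⟨max L₁ L₂, fun σ hσ => ?_⟩
    obtain ⟨c₁, hc₁⟩ := h₁ σ (le_of_max_le_left hσ)
    obtain ⟨c₂, hc₂⟩ := h₂ σ (le_of_max_le_right hσ)
    exact ⟨c₁ + c₂, by rw [mul_add, add_mul, hc₁, hc₂, add_smul]⟩
  | smul r y _ hy =>
    obtain ⟨L, h⟩ := hy
    refine ⟨L, fun σ hσ => ?_⟩
    obtain ⟨c, hc⟩ := h σ hσ
    exact ⟨r * c, by rw [mul_smul_comm, smul_mul_assoc, hc, smul_smul]⟩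

/-- The compressions `S_σ* p S_σ` are projections close to the scalar compressions of an
approximant of `p` in the span of the `P_μ`. -/
theorem IsCuntzFamily.exists_forall_Pw_mul_eq_zero_or_eq {p : A} (hpD : p ∈ Ddiag S)
    (hp : IsStarProjection p) :
    ∃ L, ∀ σ : List (Fin n), L ≤ σ.length → Pw S σ * p = 0 ∨ Pw S σ * p = Pw S σ := by
  obtain ⟨x, hx, hpx⟩ : ∃ x ∈ Submodule.span ℂ (Set.range (Pw S)), ‖p - x‖ < 1 / 2 := by
    have hcl : p ∈ closure (Submodule.span ℂ (Set.range (Pw S)) : Set A) := by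
      rwa [← Submodule.topologicalClosure_coe]
    obtain ⟨x, hx, hd⟩ := Metric.mem_closure_iff.mp hcl (1 / 2) (by norm_num)
    exact ⟨x, hx, by rwa [← dist_eq_norm]⟩
  obtain ⟨L, hL⟩ := hS.exists_forall_star_Sw_mul_mul_Sw_eq_smul_one hx
  refine ⟨L, fun σ hσ => ?_⟩
  obtain ⟨c, hc⟩ := hL σ hσ
  have hiso := hS.star_Sw_mul_Sw_self σ
  have hcomm := (hS.commute_Pw_of_mem_Ddiag hpD σ).eq
  set r := star (Sw S σ) * p * Sw S σ
  have hPp : Pw S σ * p = Sw S σ * r * star (Sw S σ) := by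
    calc Pw S σ * p = Pw S σ * (Pw S σ * p) := by
          rw [← mul_assoc, (hS.isStarProjection_Pw σ).isIdempotentElem.eq]
      _ = Pw S σ * (p * Pw S σ) := by rw [hcomm]
      _ = Sw S σ * r * star (Sw S σ) := by simp only [Pw, r, mul_assoc]
  have hr : IsStarProjection r := by
    refine ⟨?_, ?_⟩
    · calc r * r = star (Sw S σ) * (p * Pw S σ * p) * Sw S σ := by simp only [Pw, r, mul_assoc]
        _ = star (Sw S σ) * (Pw S σ * p) * Sw S σ := by
          rw [hcomm, mul_assoc (Pw S σ), hp.isIdempotentElem.eq]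
        _ = r := by simp only [Pw, r, ← mul_assoc, hiso, one_mul]
    · simp [IsSelfAdjoint, r, star_mul, hp.isSelfAdjoint.star_eq, mul_assoc]
  have hrc : ‖r - c • 1‖ < 1 / 2 := by
    have : r - c • 1 = star (Sw S σ) * (p - x) * Sw S σ := by simp only [r, mul_sub, sub_mul, hc]
    rw [this]
    exact (norm_star_mul_mul_le_of_star_mul_self hiso _).trans_lt hpx
  rcases hr.eq_zero_or_eq_one_of_norm_sub_lt hrc with h0 | h1
  · left
    rw [hPp, h0, mul_zero, zero_mul]
  · right
    rw [hPp, h1, mul_one, Pw]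

end Diagonal

section FixedProjection

variable {A : Type*} [CStarAlgebra A] {n : ℕ}

open Classical in
/-- This is `𝟙_w` once `N` bounds the lengths of the source words of `w`. -/
noncomputable def fixedProj (S : Fin n → A) (w : A) (N : ℕ) : A :=
  ∑ f : Fin N → Fin n with w * Sw S (List.ofFn f) = Sw S (List.ofFn f), Pw S (List.ofFn f)

theorem fixedProj_mem_Ddiag (S : Fin n → A) (w : A) (N : ℕ) : fixedProj S w N ∈ Ddiag S :=
  Submodule.sum_mem _ fun f _ =>
    Submodule.le_topologicalClosure _ (Submodule.subset_span ⟨List.ofFn f, rfl⟩)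

variable {S : Fin n → A} (hS : IsCuntzFamily S)
include hS

theorem IsCuntzFamily.fixedProj_mul_eq_self {w : A} (hw : w ∈ unitary A) (N : ℕ) :
    fixedProj S w N * w = fixedProj S w N := by
  classical
  rw [fixedProj, Finset.sum_mul]
  refine Finset.sum_congr rfl fun f hf => ?_
  exact (mul_star_mul_eq_self_iff (hS.star_Sw_mul_Sw_self _) hw).mpr (Finset.mem_filter.mp hf).2

variable [PartialOrder A] [StarOrderedRing A]

theorem IsCuntzFamily.isStarProjection_fixedProj (w : A) (N : ℕ) :
    IsStarProjection (fixedProj S w N) := by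
  classical
  refine ⟨?_, ?_⟩
  · rw [IsIdempotentElem, fixedProj, Finset.sum_mul_sum]
    refine Finset.sum_congr rfl fun f hf => ?_
    rw [Finset.sum_eq_single f]
    · exact (hS.isStarProjection_Pw _).isIdempotentElem.eq
    · intro g _ hgf
      rw [hS.Pw_mul_Pw (by simp), if_neg]
      exact fun h => hgf (List.ofFn_injective (h.eq_of_length (by simp))).symm
    · exact fun h => absurd hf h
  · exact isSelfAdjoint_sum _ fun f _ => (hS.isStarProjection_Pw _).isSelfAdjoint

theorem IsCuntzFamily.Pw_mul_fixedProj {w : A} {N : ℕ} {σ : List (Fin n)} (hσ : N ≤ σ.length)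
    (hfix : w * Sw S (σ.take N) = Sw S (σ.take N)) : Pw S σ * fixedProj S w N = Pw S σ := by
  classical
  have hf₀ := Fin.ofFn_take_get σ hσ
  rw [fixedProj, Finset.mul_sum, Finset.sum_eq_single (Fin.take N hσ σ.get)]
  · rw [(hS.commute_Pw _ _).eq, hS.Pw_mul_Pw (by simp [hσ]), if_pos (hf₀ ▸ List.take_prefix _ _)]
  · intro g _ hg
    rw [(hS.commute_Pw _ _).eq, hS.Pw_mul_Pw (by simp [hσ]), if_neg]
    intro hpre
    apply hg
    apply List.ofFn_injective
    rw [hf₀, List.prefix_iff_eq_take.mp hpre, List.length_ofFn]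
  · intro h
    exact absurd (Finset.mem_filter.mpr ⟨Finset.mem_univ _, by rwa [hf₀]⟩) h

end FixedProjection

theorem IsCuntzFamily.le_fixedProj {A : Type*} [CStarAlgebra A] [PartialOrder A]
    [StarOrderedRing A] {n : ℕ} {S : Fin n → A} (hS : IsCuntzFamily S) (hn : 2 ≤ n) {w : A}
    {J : Finset (List (Fin n) × List (Fin n))} (hJ : w = ∑ p ∈ J, Sw S p.1 * star (Sw S p.2))
    (hw : w ∈ unitary A) {N : ℕ} (hN : ∀ p ∈ J, p.2.length ≤ N) {p : A} (hpD : p ∈ Ddiag S)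
    (hp : IsStarProjection p) (hpw : p * w = p) : p ≤ fixedProj S w N := by
  obtain ⟨L, hL⟩ := hS.exists_forall_Pw_mul_eq_zero_or_eq hpD hp
  refine hp.le_of_mul_eq_left (hS.isStarProjection_fixedProj w N) ?_
  have hcyl (f : Fin (max L N) → Fin n) :
      Pw S (List.ofFn f) * p * fixedProj S w N = Pw S (List.ofFn f) * p := by
    have hlen : (List.ofFn f).length = max L N := List.length_ofFn
    rcases hL _ (hlen.symm ▸ le_max_left L N) with h0 | h1
    · rw [h0, zero_mul]
    have hfix : w * Sw S (List.ofFn f) = Sw S (List.ofFn f) := by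
      rw [← mul_star_mul_eq_self_iff (hS.star_Sw_mul_Sw_self _) hw, ← Pw, ← h1, mul_assoc, hpw]
    rw [h1, hS.Pw_mul_fixedProj (hlen.symm ▸ le_max_right L N)]
    refine hS.mul_Sw_eq_of_mul_Sw_append_eq hn hJ (γ := (List.ofFn f).drop N)
      (fun q hq => by simpa [hlen] using hN q hq) ?_
    rwa [List.take_append_drop]
  calc p * fixedProj S w N
      = (∑ f : Fin (max L N) → Fin n, Pw S (List.ofFn f)) * p * fixedProj S w N := by
        rw [hS.sum_Pw_ofFn, one_mul]
    _ = ∑ f : Fin (max L N) → Fin n, Pw S (List.ofFn f) * p := by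
        simp only [Finset.sum_mul, hcyl]
    _ = p := by rw [← Finset.sum_mul, hS.sum_Pw_ofFn, one_mul]

theorem stmt_7_general {A : Type*} [CStarAlgebra A] [PartialOrder A] [StarOrderedRing A]
    (n : ℕ) (hn : 2 ≤ n) (S : Fin n → A)
    (hiso : ∀ i, star (S i) * S i = 1)
    (hsum : ∑ i, S i * star (S i) = 1)
    (w : A) (hw : w ∈ Vgrp S) :
    ∃ p : A, IsOneW S w p := by
  have hS : IsCuntzFamily S := ⟨hiso, hsum⟩
  obtain ⟨⟨J, hJ⟩, hwu⟩ := hw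
  have hN : ∀ p ∈ J, p.2.length ≤ J.sup (·.2.length) := fun p hp =>
    Finset.le_sup (f := (·.2.length)) hp
  refine ⟨fixedProj S w (J.sup (·.2.length)), fixedProj_mem_Ddiag S w _,
    isProjection_iff_isStarProjection.mpr (hS.isStarProjection_fixedProj w _),
    hS.fixedProj_mul_eq_self hwu _, fun p hpD hp hpw => ?_⟩
  exact hS.le_fixedProj hn hJ hwu hN hpD (isProjection_iff_isStarProjection.mp hp) hpw

theorem stmt_7 {A : Type*} [CStarAlgebra A] [PartialOrder A] [StarOrderedRing A]
    (n : ℕ) (hn : 2 ≤ n) (S : Fin n → A)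
    (hiso : ∀ i, star (S i) * S i = 1)
    (hsum : ∑ i, S i * star (S i) = 1)
    (hgen : (StarAlgebra.adjoin ℂ (Set.range S)).topologicalClosure = ⊤)
    (w : A) (hw : w ∈ Vgrp S) :
    ∃ p : A, IsOneW S w p :=
  stmt_7_general n hn S hiso hsum w hw
end

section
/- Let μ, ν be non-empty orthogonal multi-indices over {1,2} with |μ| ≥ 2 and |ν| ≥ 2. Then there exists w ∈ V such that P_μ ≤ 𝟙_w and P_ν w P_ν = 0. -/
open scoped BigOperators

variable {A : Type*} [CStarAlgebra A] [PartialOrder A] [StarOrderedRing A]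

section Aux
variable (S : Fin 2 → A)

lemma aux_Sw_nil : Sw S ([] : List (Fin 2)) = 1 := by simp [Sw]
lemma aux_Sw_cons (a : Fin 2) (l : List (Fin 2)) : Sw S (a :: l) = S a * Sw S l := by
  simp [Sw]
lemma aux_Sw_append (l r : List (Fin 2)) : Sw S (l ++ r) = Sw S l * Sw S r := by
  simp [Sw]

variable (hiso : ∀ i, star (S i) * S i = 1)
include hiso

lemma aux_star_Sw_mul_append (l r : List (Fin 2)) :
    star (Sw S l) * Sw S (l ++ r) = Sw S r := by
  induction l with
  | nil => simp [aux_Sw_nil]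
  | cons a l ih =>
    rw [List.cons_append, aux_Sw_cons, aux_Sw_cons, star_mul, mul_assoc,
      ← mul_assoc (star (S a)), hiso, one_mul, ih]

lemma aux_star_Sw_Sw (l : List (Fin 2)) : star (Sw S l) * Sw S l = 1 := by
  simpa [aux_Sw_nil] using aux_star_Sw_mul_append S hiso l []

variable (hsum : S 0 * star (S 0) + S 1 * star (S 1) = 1)
include hsum

lemma aux_gen_orth {a b : Fin 2} (hab : a ≠ b) : star (S a) * S b = 0 := by
  have hiso' : ∀ i x, star (S i) * (S i * x) = x := by
    intro i x; rw [← mul_assoc, hiso, one_mul]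
  have key : ∀ c d : Fin 2, c ≠ d → star (S c) * S d = 0 := by
    intro c d hcd
    have h := congrArg (fun x => star (S c) * (x * S d)) hsum
    simp only [mul_add, add_mul, one_mul, mul_one, mul_assoc] at h
    fin_cases c <;> fin_cases d <;>
        simp only [Fin.mk_zero, Fin.mk_one, Fin.isValue, id_eq] at h hcd ⊢ <;>
        simp only [hiso, hiso', mul_one] at h <;>
      first
        | exact absurd rfl hcd
        | exact add_eq_right.mp h
  exact key a b hab

lemma aux_ortho_key (ρ : List (Fin 2)) {a b : Fin 2} (hab : a ≠ b) (l r : List (Fin 2)) :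
    star (Sw S (ρ ++ a :: l)) * Sw S (ρ ++ b :: r) = 0 := by
  have h1 : ∀ z : A, star (Sw S ρ) * (Sw S ρ * z) = z := by
    intro z; rw [← mul_assoc, aux_star_Sw_Sw S hiso, one_mul]
  have h2 : ∀ z : A, star (S a) * (S b * z) = 0 := by
    intro z; rw [← mul_assoc, aux_gen_orth S hiso hsum hab, zero_mul]
  simp only [aux_Sw_append, aux_Sw_cons, star_mul, mul_assoc, h1, h2, mul_zero]

omit hiso hsum in
lemma aux_orth_symm {x y : A} (h : star x * y = 0) : star y * x = 0 := by
  have := congrArg star h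
  rwa [star_mul, star_star, star_zero] at this

omit hiso hsum in
lemma aux_star_Pw (l : List (Fin 2)) : star (Pw S l) = Pw S l := by
  simp [Pw, star_mul, mul_assoc]

omit hsum in
lemma aux_Pw_idem (l : List (Fin 2)) : Pw S l * Pw S l = Pw S l := by
  show Sw S l * star (Sw S l) * (Sw S l * star (Sw S l)) = Sw S l * star (Sw S l)
  rw [mul_assoc, ← mul_assoc (star (Sw S l)), aux_star_Sw_Sw S hiso, one_mul]

omit hiso hsum in
lemma aux_Pw_mul_Sw_zero {α β : List (Fin 2)} (h : star (Sw S α) * Sw S β = 0) :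
    Pw S α * Sw S β = 0 := by
  show Sw S α * star (Sw S α) * Sw S β = 0
  rw [mul_assoc, h, mul_zero]

omit hiso hsum in
lemma aux_Pw_mul_Pw_zero {α β : List (Fin 2)} (h : star (Sw S α) * Sw S β = 0) :
    Pw S α * Pw S β = 0 := by
  show Sw S α * star (Sw S α) * (Sw S β * star (Sw S β)) = 0
  rw [mul_assoc, ← mul_assoc (star (Sw S α)), h, zero_mul, mul_zero]

omit hsum in
lemma aux_Pw_prefix1 (l r : List (Fin 2)) : Pw S l * Pw S (l ++ r) = Pw S (l ++ r) := by
  show Sw S l * star (Sw S l) * (Sw S (l ++ r) * star (Sw S (l ++ r))) = _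
  rw [mul_assoc, ← mul_assoc (star (Sw S l)), aux_star_Sw_mul_append S hiso,
    ← mul_assoc, ← aux_Sw_append]
  rfl

omit hsum in
lemma aux_Pw_prefix2 (l r : List (Fin 2)) : Pw S (l ++ r) * Pw S l = Pw S (l ++ r) := by
  have h : star (Sw S (l ++ r)) * Sw S l = star (Sw S r) := by
    have := congrArg star (aux_star_Sw_mul_append S hiso l r)
    rwa [star_mul, star_star] at this
  show Sw S (l ++ r) * star (Sw S (l ++ r)) * (Sw S l * star (Sw S l)) = _
  rw [mul_assoc, ← mul_assoc (star (Sw S (l ++ r))), h, ← mul_assoc, mul_assoc (Sw S (l++r)),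
    ← star_mul, ← aux_Sw_append]
  rfl

omit hiso hsum in
lemma aux_tri (α β : List (Fin 2)) :
    (∃ r, β = α ++ r) ∨ (∃ r, α = β ++ r) ∨
      (∃ ρ a b l r, a ≠ b ∧ α = ρ ++ a :: l ∧ β = ρ ++ b :: r) := by
  induction α generalizing β with
  | nil => exact Or.inl ⟨β, rfl⟩
  | cons a α ih =>
    cases β with
    | nil => exact Or.inr (Or.inl ⟨a :: α, rfl⟩)
    | cons b β =>
      rcases eq_or_ne a b with rfl | hab
      · rcases ih β with ⟨r, hr⟩ | ⟨r, hr⟩ | ⟨ρ, x, y, l, r, hxy, h1, h2⟩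
        · exact Or.inl ⟨r, by rw [hr]; rfl⟩
        · exact Or.inr (Or.inl ⟨r, by rw [hr]; rfl⟩)
        · exact Or.inr (Or.inr ⟨a :: ρ, x, y, l, r, hxy, by rw [h1]; rfl, by rw [h2]; rfl⟩)
      · exact Or.inr (Or.inr ⟨[], a, b, α, β, hab, rfl, rfl⟩)

lemma aux_Pw_comm (α β : List (Fin 2)) : Pw S α * Pw S β = Pw S β * Pw S α := by
  rcases aux_tri α β with ⟨r, rfl⟩ | ⟨r, rfl⟩ | ⟨ρ, a, b, l, r, hab, h1, h2⟩
  · rw [aux_Pw_prefix1 S hiso, aux_Pw_prefix2 S hiso]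
  · rw [aux_Pw_prefix1 S hiso, aux_Pw_prefix2 S hiso]
  · subst h1; subst h2
    rw [aux_Pw_mul_Pw_zero S (aux_ortho_key S hiso hsum ρ hab l r),
      aux_Pw_mul_Pw_zero S (aux_ortho_key S hiso hsum ρ hab.symm r l)]

omit hsum in
lemma aux_Pw_ne_zero (h01 : (1 : A) ≠ 0) (l : List (Fin 2)) : Pw S l ≠ 0 := by
  intro h
  apply h01
  have key : (1 : A) = star (Sw S l) * Pw S l * Sw S l := by
    show (1 : A) = star (Sw S l) * (Sw S l * star (Sw S l)) * Sw S l
    rw [← mul_assoc, aux_star_Sw_Sw S hiso, one_mul, aux_star_Sw_Sw S hiso]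
  rw [h, mul_zero, zero_mul] at key
  exact key

end Aux

def flip2 : Fin 2 → Fin 2 := fun c => if c = 0 then 1 else 0

lemma flip2_ne (c : Fin 2) : flip2 c ≠ c := by fin_cases c <;> simp [flip2]

def sib (ν : List (Fin 2)) (i : ℕ) : List (Fin 2) := ν.take i ++ [flip2 (ν.getD i 0)]

lemma ldecomp {X : Type*} (l : List X) (d : X) {i : ℕ} (h : i < l.length) :
    l = l.take i ++ l.getD i d :: l.drop (i + 1) := by
  conv_lhs => rw [← List.take_append_drop i l]
  rw [List.drop_eq_getElem_cons h, List.getD_eq_getElem l d h]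

section Aux2
variable (S : Fin 2 → A)
variable (hiso : ∀ i, star (S i) * S i = 1)
variable (hsum : S 0 * star (S 0) + S 1 * star (S 1) = 1)
include hiso hsum

lemma aux_hsum' (c : Fin 2) :
    S c * star (S c) + S (flip2 c) * star (S (flip2 c)) = 1 := by
  fin_cases c
  · exact hsum
  · rw [add_comm]; exact hsum

omit hiso hsum in
lemma aux_Pw_single (c : Fin 2) : Pw S [c] = S c * star (S c) := by
  simp [Pw, Sw]

lemma aux_partition (ν : List (Fin 2)) :
    ∑ i ∈ Finset.range ν.length, Pw S (sib ν i) = 1 - Pw S ν := by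
  induction ν with
  | nil => simp [Pw, Sw]
  | cons c l ih =>
    have hsib0 : sib (c :: l) 0 = [flip2 c] := by simp [sib]
    have hsibS : ∀ i, sib (c :: l) (i + 1) = c :: sib l i := by
      intro i; simp [sib]
    have hPwc : ∀ t, Pw S (c :: t) = S c * Pw S t * star (S c) := by
      intro t; simp [Pw, aux_Sw_cons, star_mul, mul_assoc]
    rw [List.length_cons, Finset.sum_range_succ']
    simp only [hsibS, hsib0]
    have hstep : ∑ i ∈ Finset.range l.length, Pw S (c :: sib l i)
        = S c * (1 - Pw S l) * star (S c) := by
      rw [← ih, Finset.mul_sum, Finset.sum_mul]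
      exact Finset.sum_congr rfl fun i _ => hPwc _
    rw [hstep]
    have h2 : S c * (1 - Pw S l) * star (S c) = S c * star (S c) - Pw S (c :: l) := by
      rw [mul_sub, sub_mul, mul_one, hPwc]
    rw [h2, aux_Pw_single]
    have h4 := aux_hsum' S hiso hsum c
    rw [← h4]; abel

omit hiso hsum in
lemma aux_sib_orth_nu {ν : List (Fin 2)} {i : ℕ} (hi : i < ν.length)
    (hiso : ∀ i, star (S i) * S i = 1)
    (hsum : S 0 * star (S 0) + S 1 * star (S 1) = 1) :
    star (Sw S (sib ν i)) * Sw S ν = 0 := by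
  have hd := ldecomp ν (0 : Fin 2) hi
  have key := aux_ortho_key S hiso hsum (ν.take i) (flip2_ne (ν.getD i 0)) [] (ν.drop (i + 1))
  rw [← hd] at key
  exact key

omit hiso hsum in
lemma aux_sib_decomp {ν : List (Fin 2)} {i j : ℕ} (hij : i < j) (hj : j < ν.length) :
    sib ν j = ν.take i ++ ν.getD i 0 ::
      ((ν.take j).drop (i + 1) ++ [flip2 (ν.getD j 0)]) := by
  have hlen : i < (ν.take j).length := by
    simp only [List.length_take]; omega
  have h1 : ν.take j = (ν.take j).take i ++ (ν.take j).getD i 0 :: (ν.take j).drop (i + 1) :=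
    ldecomp _ 0 hlen
  have h2 : (ν.take j).take i = ν.take i := by
    rw [List.take_take]; congr 1; omega
  have h3 : (ν.take j).getD i 0 = ν.getD i 0 := by
    rw [List.getD_eq_getElem _ _ hlen, List.getD_eq_getElem _ _ (hij.trans hj)]
    simp [List.getElem_take]
  show ν.take j ++ [flip2 (ν.getD j 0)] = _
  conv_lhs => rw [h1, h2, h3]
  simp [List.append_assoc]

omit hiso hsum in
lemma aux_sib_orth_sib {ν : List (Fin 2)} {i j : ℕ} (hi : i < ν.length)
    (hj : j < ν.length) (hij : i ≠ j)
    (hiso : ∀ i, star (S i) * S i = 1)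
    (hsum : S 0 * star (S 0) + S 1 * star (S 1) = 1) :
    star (Sw S (sib ν i)) * Sw S (sib ν j) = 0 := by
  rcases lt_or_gt_of_ne hij with h | h
  · have hs : sib ν i = ν.take i ++ flip2 (ν.getD i 0) :: [] := rfl
    rw [hs, aux_sib_decomp h hj]
    exact aux_ortho_key S hiso hsum (ν.take i) (flip2_ne _) [] _
  · apply aux_orth_symm
    have hs : sib ν j = ν.take j ++ flip2 (ν.getD j 0) :: [] := rfl
    rw [hs, aux_sib_decomp h hi]
    exact aux_ortho_key S hiso hsum (ν.take j) (flip2_ne _) [] _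

end Aux2

lemma proj_le_of {p q : A} (hps : star p = p) (hqs : star q = q)
    (hpi : p * p = p) (hqi : q * q = q) (hpq : p * q = p) : p ≤ q := by
  have hqp : q * p = p := by
    have := congrArg star hpq
    rwa [star_mul, hqs, hps] at this
  have key : star (q - p) * (q - p) = q - p := by
    rw [star_sub, hps, hqs, sub_mul, mul_sub, mul_sub, hqi, hpi, hpq, hqp]
    abel
  have h0 : (0 : A) ≤ q - p := key ▸ star_mul_self_nonneg (q - p)
  exact sub_nonneg.mp h0

def commSub (c : A) : Submodule ℂ A where
  carrier := {x | x * c = c * x}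
  add_mem' := fun hx hy => by
    simp only [Set.mem_setOf_eq] at *
    rw [add_mul, mul_add, hx, hy]
  zero_mem' := by simp
  smul_mem' := fun r x hx => by
    simp only [Set.mem_setOf_eq] at *
    rw [smul_mul_assoc, hx, mul_smul_comm]

lemma comm_proj_mul {x p : A} (hx : x * x = x) (hp : p * p = p)
    (hc : x * p = p * x) : (x * p) * (x * p) = x * p := by
  rw [mul_assoc x p (x * p), ← mul_assoc p x p, ← hc, mul_assoc x p p, hp,
    ← mul_assoc x x p, hx]


theorem stmt_13 {A : Type*} [CStarAlgebra A] [PartialOrder A] [StarOrderedRing A]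
    (S : Fin 2 → A)
    (hiso : ∀ i, star (S i) * S i = 1)
    (hsum : S 0 * star (S 0) + S 1 * star (S 1) = 1)
    (hgen : (StarAlgebra.adjoin ℂ (Set.range S)).topologicalClosure = ⊤)
    (μ ν : List (Fin 2)) (hμ : μ ≠ []) (hν : ν ≠ [])
    (horth : Pw S μ * Pw S ν = 0) (hμ2 : 2 ≤ μ.length) (hν2 : 2 ≤ ν.length) :
    ∃ w p : A, w ∈ Vgrp S ∧ IsOneW S w p ∧ Pw S μ ≤ p ∧ Pw S ν * w * Pw S ν = 0 := by
  classical
  by_cases h01 : (1 : A) = 0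
  · -- degenerate algebra
    have hz : ∀ x : A, x = 0 := fun x => by rw [← mul_one x, h01, mul_zero]
    refine ⟨1, 1, ⟨⟨{([], [])}, ?_⟩, ?_⟩, ⟨?_, ⟨?_, ?_⟩, ?_, ?_⟩, ?_, ?_⟩
    · simp [Sw]
    · exact one_mem (unitary A)
    · exact Submodule.le_topologicalClosure _
        (Submodule.subset_span ⟨([] : List (Fin 2)), by simp [Pw, Sw]⟩)
    · exact IsSelfAdjoint.one A
    · exact one_mul 1
    · exact one_mul 1
    · intro p' _ _ _
      rw [hz p']
      simpa using star_mul_self_nonneg (1 : A)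
    · rw [hz (Pw S μ)]
      simpa using star_mul_self_nonneg (1 : A)
    · exact hz _
  · -- main case
    have hnz := aux_Pw_ne_zero S hiso h01
    rcases aux_tri μ ν with ⟨r, hr⟩ | ⟨r, hr⟩ | ⟨ρ, a, b, l, r, hab, hμd, hνd⟩
    · exfalso; subst hr
      rw [aux_Pw_prefix1 S hiso] at horth
      exact hnz _ horth
    · exfalso; subst hr
      rw [aux_Pw_prefix2 S hiso] at horth
      exact hnz _ horth
    obtain ⟨i₀, hi₀, hσμ⟩ :
        ∃ i₀, i₀ < ν.length ∧ star (Sw S (sib ν i₀)) * Sw S μ = 0 := by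
      cases ρ with
      | nil =>
        simp only [List.nil_append] at hμd hνd
        cases r with
        | nil => subst hνd; simp at hν2
        | cons c r' =>
          refine ⟨1, by subst hνd; simp, ?_⟩
          have hσ : sib ν 1 = [b, flip2 c] := by subst hνd; simp [sib]
          rw [hσ, hμd]
          exact aux_ortho_key S hiso hsum [] (Ne.symm hab) [flip2 c] l
      | cons r₀ ρ' =>
        refine ⟨0, by subst hνd; simp, ?_⟩
        have hσ : sib ν 0 = [flip2 r₀] := by subst hνd; simp [sib]
        rw [hσ, hμd]
        have key := aux_ortho_key S hiso hsum [] (flip2_ne r₀) [] (ρ' ++ a :: l)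
        simpa using key
    set σ : List (Fin 2) := sib ν i₀ with hσdef
    have hσν : star (Sw S σ) * Sw S ν = 0 := aux_sib_orth_nu S hi₀ hiso hsum
    have hνσ : star (Sw S ν) * Sw S σ = 0 := aux_orth_symm hσν
    have hμσ : star (Sw S μ) * Sw S σ = 0 := aux_orth_symm hσμ
    have hνν := aux_star_Sw_Sw S hiso ν
    have hσσ := aux_star_Sw_Sw S hiso σ
    have hPσPν : Pw S σ * Pw S ν = 0 := aux_Pw_mul_Pw_zero S hσν
    have hPμPσ : Pw S μ * Pw S σ = 0 := aux_Pw_mul_Pw_zero S hμσ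
    set I : Finset ℕ := (Finset.range ν.length).erase i₀ with hIdef
    set q : A := ∑ i ∈ I, Pw S (sib ν i) with hqdef
    set t : A := Sw S ν * star (Sw S σ) + Sw S σ * star (Sw S ν) with htdef
    have hq1 : q = 1 - Pw S ν - Pw S σ := by
      have hmem : i₀ ∈ Finset.range ν.length := Finset.mem_range.mpr hi₀
      have hkey := Finset.sum_erase_add (Finset.range ν.length)
        (fun i => Pw S (sib ν i)) hmem
      rw [aux_partition S hiso hsum ν] at hkey
      exact eq_sub_of_add_eq hkey
    have hqSν : q * Sw S ν = 0 := by
      rw [hqdef, Finset.sum_mul]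
      refine Finset.sum_eq_zero fun i hi => ?_
      exact aux_Pw_mul_Sw_zero S
        (aux_sib_orth_nu S (Finset.mem_range.mp (Finset.mem_of_mem_erase hi)) hiso hsum)
    have hqSσ : q * Sw S σ = 0 := by
      rw [hqdef, Finset.sum_mul]
      refine Finset.sum_eq_zero fun i hi => ?_
      obtain ⟨hne, hmem⟩ := Finset.mem_erase.mp hi
      exact aux_Pw_mul_Sw_zero S
        (aux_sib_orth_sib S (Finset.mem_range.mp hmem) hi₀ hne hiso hsum)
    have hqs : star q = q := by
      rw [hqdef, star_sum]
      exact Finset.sum_congr rfl fun i _ => aux_star_Pw S _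
    have hqq : q * q = q := by
      rw [hqdef, Finset.sum_mul]
      refine Finset.sum_congr rfl fun i hi => ?_
      rw [Finset.mul_sum]
      have hkey : ∑ j ∈ I, Pw S (sib ν i) * Pw S (sib ν j)
          = Pw S (sib ν i) * Pw S (sib ν i) := by
        refine Finset.sum_eq_single_of_mem i hi fun j hj hji => ?_
        exact aux_Pw_mul_Pw_zero S (aux_sib_orth_sib S
          (Finset.mem_range.mp (Finset.mem_of_mem_erase hi))
          (Finset.mem_range.mp (Finset.mem_of_mem_erase hj))
          (fun h => hji (h.symm)) hiso hsum)
      rw [hkey, aux_Pw_idem S hiso]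
    have hts : star t = t := by
      rw [htdef, star_add, star_mul, star_mul, star_star, star_star, add_comm]
    have htSν : t * Sw S ν = Sw S σ := by
      rw [htdef, add_mul, mul_assoc, hσν, mul_zero, mul_assoc, hνν, mul_one, zero_add]
    have htt : t * t = Pw S ν + Pw S σ := by
      have h1 : ∀ z : A, star (Sw S σ) * (Sw S ν * z) = 0 := fun z => by
        rw [← mul_assoc, hσν, zero_mul]
      have h2 : ∀ z : A, star (Sw S σ) * (Sw S σ * z) = z := fun z => by
        rw [← mul_assoc, hσσ, one_mul]
      have h3 : ∀ z : A, star (Sw S ν) * (Sw S ν * z) = z := fun z => by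
        rw [← mul_assoc, hνν, one_mul]
      have h4 : ∀ z : A, star (Sw S ν) * (Sw S σ * z) = 0 := fun z => by
        rw [← mul_assoc, hνσ, zero_mul]
      rw [htdef]
      simp only [add_mul, mul_add, mul_assoc, h1, h2, h3, h4, mul_zero, add_zero,
        zero_add, Pw]
      exact add_comm _ _
    have hqt : q * t = 0 := by
      rw [htdef, mul_add, ← mul_assoc, ← mul_assoc, hqSν, hqSσ, zero_mul, zero_mul,
        add_zero]
    have htq : t * q = 0 := by
      have hkey := congrArg star hqt
      rwa [star_mul, hts, hqs, star_zero] at hkey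
    set w : A := q + t with hwdef
    have hws : star w = w := by rw [hwdef, star_add, hqs, hts]
    have hww : w * w = 1 := by
      rw [hwdef, add_mul q t (q + t), mul_add q q t, mul_add t q t, hqq, hqt, htq, htt, hq1]
      abel
    have hwU : w ∈ unitary A := by
      rw [Unitary.mem_iff]
      constructor <;> rw [hws] <;> exact hww
    have hne_of_orth : ∀ α β : List (Fin 2), star (Sw S α) * Sw S β = 0 → α ≠ β := by
      intro α β h heq
      apply h01
      rw [heq, aux_star_Sw_Sw S hiso] at h
      exact h
    have hσνne : σ ≠ ν := hne_of_orth _ _ hσν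
    have hsibν : ∀ i, i < ν.length → sib ν i ≠ ν := fun i hi =>
      hne_of_orth _ _ (aux_sib_orth_nu S hi hiso hsum)
    have hsibsib : ∀ i j, i < ν.length → j < ν.length → i ≠ j → sib ν i ≠ sib ν j :=
      fun i j hi hj hij => hne_of_orth _ _ (aux_sib_orth_sib S hi hj hij hiso hsum)
    have hwV : w ∈ Vset S := by
      refine ⟨insert (ν, σ) (insert (σ, ν) (I.image fun i => (sib ν i, sib ν i))), ?_⟩
      have hm2 : (σ, ν) ∉ I.image fun i => (sib ν i, sib ν i) := by
        intro h
        obtain ⟨i, hi, hpair⟩ := Finset.mem_image.mp h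
        have := (Prod.mk.injEq _ _ _ _).mp hpair
        exact hsibν i (Finset.mem_range.mp (Finset.mem_of_mem_erase hi)) this.2
      have hm1 : (ν, σ) ∉ insert (σ, ν) (I.image fun i => (sib ν i, sib ν i)) := by
        intro h
        rcases Finset.mem_insert.mp h with h | h
        · exact hσνne ((Prod.mk.injEq _ _ _ _).mp h).2
        · obtain ⟨i, hi, hpair⟩ := Finset.mem_image.mp h
          have hp := (Prod.mk.injEq _ _ _ _).mp hpair
          exact hσνne (hp.2.symm.trans hp.1)
      rw [Finset.sum_insert hm1, Finset.sum_insert hm2, Finset.sum_image ?inj]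
      case inj =>
        intro x hx y hy hxy
        by_contra hne
        exact hsibsib x y (Finset.mem_range.mp (Finset.mem_of_mem_erase hx))
          (Finset.mem_range.mp (Finset.mem_of_mem_erase hy)) hne
          ((Prod.mk.injEq _ _ _ _).mp hxy).1
      rw [hwdef, htdef, hqdef]
      simp only [Pw]
      abel
    have hqD : q ∈ Ddiag S := by
      have hmem : (∑ i ∈ I, Pw S (sib ν i)) ∈ Submodule.span ℂ (Set.range (Pw S)) :=
        Submodule.sum_mem _ fun i _ => Submodule.subset_span ⟨sib ν i, rfl⟩
      rw [hqdef]
      exact Submodule.le_topologicalClosure _ hmem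
    have hcomm : ∀ p' ∈ Ddiag S, ∀ τ : List (Fin 2), p' * Pw S τ = Pw S τ * p' := by
      intro p' hp' τ
      have hKc : IsClosed ((commSub (Pw S τ) : Submodule ℂ A) : Set A) :=
        isClosed_eq (continuous_mul_right _) (continuous_mul_left _)
      have hle : Submodule.span ℂ (Set.range (Pw S)) ≤ commSub (Pw S τ) := by
        rw [Submodule.span_le]
        rintro x ⟨β, rfl⟩
        exact aux_Pw_comm S hiso hsum β τ
      exact Submodule.topologicalClosure_minimal _ hle hKc hp'
    refine ⟨w, q, ⟨hwV, hwU⟩, ⟨hqD, ⟨hqs, hqq⟩, ?_, ?_⟩, ?_, ?_⟩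
    · -- q * w = q
      rw [hwdef, mul_add, hqq, hqt, add_zero]
    · -- maximality
      intro p' hp'D hp'proj hp'w
      have hps : star p' = p' := hp'proj.1
      have hpp : p' * p' = p' := hp'proj.2
      have hcν : p' * Pw S ν = Pw S ν * p' := hcomm p' hp'D ν
      have hcσ : p' * Pw S σ = Pw S σ * p' := hcomm p' hp'D σ
      have hwSν : w * Sw S ν = Sw S σ := by
        rw [hwdef, add_mul, hqSν, zero_add, htSν]
      have h1 : p' * Sw S σ = p' * Sw S ν := by
        have h := congrArg (· * Sw S ν) hp'w
        rw [mul_assoc, hwSν] at h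
        exact h
      have hform : p' * Pw S ν = p' * Sw S σ * star (Sw S ν) := by
        show p' * (Sw S ν * star (Sw S ν)) = _
        rw [← mul_assoc, ← h1]
      have hse : star (p' * Pw S ν) = p' * Pw S ν := by
        rw [star_mul, aux_star_Pw S ν, hps, ← hcν]
      have hee : (p' * Pw S ν) * (p' * Pw S ν) = p' * Pw S ν :=
        comm_proj_mul hpp (aux_Pw_idem S hiso ν) hcν
      have hef : (p' * Pw S ν) * star (p' * Pw S ν) = p' * Pw S σ := by
        rw [hform, star_mul, star_mul, star_star, hps]
        have hcan : ∀ z : A, star (Sw S ν) * (Sw S ν * z) = z := fun z => by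
          rw [← mul_assoc, hνν, one_mul]
        simp only [mul_assoc, hcan]
        rw [show Sw S σ * (star (Sw S σ) * p') = Pw S σ * p' by rw [← mul_assoc]; rfl]
        rw [← hcσ, ← mul_assoc, hpp]
      have hef2 : p' * Pw S ν = p' * Pw S σ := by
        calc p' * Pw S ν = (p' * Pw S ν) * (p' * Pw S ν) := hee.symm
          _ = (p' * Pw S ν) * star (p' * Pw S ν) := by rw [hse]
          _ = p' * Pw S σ := hef
      have hν0 : p' * Pw S ν = 0 := by
        have h6 : p' * Pw S ν = (p' * Pw S ν) * Pw S ν := by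
          rw [mul_assoc, aux_Pw_idem S hiso]
        rw [h6, hef2, mul_assoc, hPσPν, mul_zero]
      have hσ0 : p' * Pw S σ = 0 := by rw [← hef2, hν0]
      have hpq : p' * q = p' := by
        rw [hq1, mul_sub, mul_sub, mul_one, hν0, hσ0, sub_zero, sub_zero]
      exact proj_le_of hps hqs hpp hqq hpq
    · -- Pw μ ≤ q
      have h1 : Pw S μ * q = Pw S μ := by
        rw [hq1, mul_sub, mul_sub, mul_one, horth, hPμPσ, sub_zero, sub_zero]
      exact proj_le_of (aux_star_Pw S μ) hqs (aux_Pw_idem S hiso μ) hqq h1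
    · -- Pw ν * w * Pw ν = 0
      have hPνq : Pw S ν * q = 0 := by
        rw [hqdef, Finset.mul_sum]
        refine Finset.sum_eq_zero fun i hi => ?_
        exact aux_Pw_mul_Pw_zero S (aux_orth_symm (aux_sib_orth_nu S
          (Finset.mem_range.mp (Finset.mem_of_mem_erase hi)) hiso hsum))
      have hPνSσ : Pw S ν * Sw S σ = 0 := aux_Pw_mul_Sw_zero S hνσ
      have hPνSν : Pw S ν * Sw S ν = Sw S ν := by
        show Sw S ν * star (Sw S ν) * Sw S ν = Sw S ν
        rw [mul_assoc, hνν, mul_one]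
      have hPνw : Pw S ν * w = Sw S ν * star (Sw S σ) := by
        rw [hwdef, mul_add, hPνq, zero_add, htdef, mul_add, ← mul_assoc, ← mul_assoc,
          hPνSσ, zero_mul, add_zero, hPνSν]
      rw [hPνw]
      show Sw S ν * star (Sw S σ) * (Sw S ν * star (Sw S ν)) = 0
      rw [mul_assoc, ← mul_assoc (star (Sw S σ)), hσν, zero_mul, mul_zero]
end
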